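/- Let n1, n2 be integers with n1 ≥ 2 and n2 ≥ 1, and let m3, m4 be integers with m3 ≥ 2 and m4 ≥ 2. Then for every quintuple of integers (x1,...,x5), not all zero, one has 3*x1^2 + 2*n1*x2^2 + (2*n2+1)*x3^2 + (2*m3^2+1)*x4^2 + (2*m4^2+1)*x5^2 + 2*m3*m4*x4*x5 + 2*x1*x3 + 2*x1*x4 + 2*x1*x5 ≥ 3. Equivalently, this quantity equals 2*n1*x2^2 + 2*n2*x3^2 + m3^2*x4^2 + m4^2*x5^2 + (m3*x4 + m4*x5)^2 + (x1+x3)^2 + (x1+x4)^2 + (x1+x5)^2 and is at least 3 whenever (x1,...,x5) ≠ 0. -/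

import Mathlib

/-! Rewritten as a sum of squares, the form has coefficient at least 4 on `x₂²`, `x₄²` and `x₅²`,
so a value below 3 forces `x₂ = x₄ = x₅ = 0`. What remains is
`2n₂x₃² + (x₁ + x₃)² + 2x₁²`, which is at least 3 unless `x₁ = x₃ = 0`. -/

lemma Int.le_mul_sq_of_ne_zero {c x : ℤ} (hc : 0 ≤ c) (hx : x ≠ 0) : c ≤ c * x ^ 2 :=
  le_mul_of_one_le_right hc ((one_le_sq_iff_one_le_abs x).mpr (Int.one_le_abs hx))

lemma three_le_two_mul_mul_sq_add_sq_add_two_mul_sq {n x y : ℤ} (hn : 1 ≤ n)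
    (hxy : ¬(x = 0 ∧ y = 0)) :
    3 ≤ 2 * n * y ^ 2 + (x + y) ^ 2 + 2 * x ^ 2 := by
  by_cases hy : y = 0
  · have hx : x ≠ 0 := fun hx => hxy ⟨hx, hy⟩
    subst hy
    nlinarith [Int.le_mul_sq_of_ne_zero zero_le_one hx]
  · have hy2 := Int.le_mul_sq_of_ne_zero (c := 2 * n) (by omega) hy
    by_cases hx : x = 0
    · subst hx
      nlinarith [Int.le_mul_sq_of_ne_zero zero_le_one hy]
    · nlinarith [Int.le_mul_sq_of_ne_zero zero_le_one hx, sq_nonneg (x + y)]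

lemma three_le_sum_sq (n1 n2 m3 m4 : ℤ) (hn1 : 2 ≤ n1) (hn2 : 1 ≤ n2)
    (hm3 : 2 ≤ m3) (hm4 : 2 ≤ m4)
    (x1 x2 x3 x4 x5 : ℤ) (hx : ¬(x1 = 0 ∧ x2 = 0 ∧ x3 = 0 ∧ x4 = 0 ∧ x5 = 0)) :
    3 ≤ 2 * n1 * x2 ^ 2 + 2 * n2 * x3 ^ 2 + m3 ^ 2 * x4 ^ 2 + m4 ^ 2 * x5 ^ 2
        + (m3 * x4 + m4 * x5) ^ 2 + (x1 + x3) ^ 2 + (x1 + x4) ^ 2 + (x1 + x5) ^ 2 := by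
  by_contra! hlt
  have hx2 : x2 = 0 := by
    by_contra h
    nlinarith [Int.le_mul_sq_of_ne_zero (c := 2 * n1) (by omega) h]
  have hx4 : x4 = 0 := by
    by_contra h
    nlinarith [Int.le_mul_sq_of_ne_zero (c := m3 ^ 2) (by positivity) h]
  have hx5 : x5 = 0 := by
    by_contra h
    nlinarith [Int.le_mul_sq_of_ne_zero (c := m4 ^ 2) (by positivity) h]
  subst hx2 hx4 hx5
  have := three_le_two_mul_mul_sq_add_sq_add_two_mul_sq hn2 (x := x1) (y := x3) (by tauto)
  linarith

/-- Case 4 of the case n = 4 of Theorem 3.7: the norm form of the rank-5 lattice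
with Gram matrix `[[3,0,1,1,1],[0,2n₁,0,0,0],[1,0,2n₂+1,0,0],[1,0,0,2m₃²+1,m₃m₄],
[1,0,0,m₃m₄,2m₄²+1]]` equals
`2n₁x₂² + 2n₂x₃² + m₃²x₄² + m₄²x₅² + (m₃x₄+m₄x₅)² + (x₁+x₃)² + (x₁+x₄)² + (x₁+x₅)²`
and takes values ≥ 3 on nonzero integer vectors. -/
theorem stmt_7 (n1 n2 m3 m4 : ℤ) (hn1 : 2 ≤ n1) (hn2 : 1 ≤ n2)
    (hm3 : 2 ≤ m3) (hm4 : 2 ≤ m4)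
    (x1 x2 x3 x4 x5 : ℤ) (hx : ¬(x1 = 0 ∧ x2 = 0 ∧ x3 = 0 ∧ x4 = 0 ∧ x5 = 0)) :
    3 * x1 ^ 2 + 2 * n1 * x2 ^ 2 + (2 * n2 + 1) * x3 ^ 2 + (2 * m3 ^ 2 + 1) * x4 ^ 2
        + (2 * m4 ^ 2 + 1) * x5 ^ 2 + 2 * m3 * m4 * x4 * x5
        + 2 * x1 * x3 + 2 * x1 * x4 + 2 * x1 * x5
      = 2 * n1 * x2 ^ 2 + 2 * n2 * x3 ^ 2 + m3 ^ 2 * x4 ^ 2 + m4 ^ 2 * x5 ^ 2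
        + (m3 * x4 + m4 * x5) ^ 2 + (x1 + x3) ^ 2 + (x1 + x4) ^ 2 + (x1 + x5) ^ 2 ∧
    3 ≤ 3 * x1 ^ 2 + 2 * n1 * x2 ^ 2 + (2 * n2 + 1) * x3 ^ 2 + (2 * m3 ^ 2 + 1) * x4 ^ 2
        + (2 * m4 ^ 2 + 1) * x5 ^ 2 + 2 * m3 * m4 * x4 * x5
        + 2 * x1 * x3 + 2 * x1 * x4 + 2 * x1 * x5 := by
  have hsum_sq :
      3 * x1 ^ 2 + 2 * n1 * x2 ^ 2 + (2 * n2 + 1) * x3 ^ 2 + (2 * m3 ^ 2 + 1) * x4 ^ 2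
        + (2 * m4 ^ 2 + 1) * x5 ^ 2 + 2 * m3 * m4 * x4 * x5
        + 2 * x1 * x3 + 2 * x1 * x4 + 2 * x1 * x5
      = 2 * n1 * x2 ^ 2 + 2 * n2 * x3 ^ 2 + m3 ^ 2 * x4 ^ 2 + m4 ^ 2 * x5 ^ 2
        + (m3 * x4 + m4 * x5) ^ 2 + (x1 + x3) ^ 2 + (x1 + x4) ^ 2 + (x1 + x5) ^ 2 := by
    ring
  exact ⟨hsum_sq, hsum_sq ▸ three_le_sum_sq n1 n2 m3 m4 hn1 hn2 hm3 hm4 x1 x2 x3 x4 x5 hx⟩
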